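/- arXiv:2110.06652 — 3 statements merged into one kernel-verified Lean document; each statement's English description precedes it below -/
import Mathlib

section
/- A connected quiver is strongly connected if and only if every one of its biconnected components is strongly connected. -/
/-
Forward direction: a directed path between two vertices of a block B can be shortened to a
simple one, and a simple path P joining two vertices of a biconnected arrow set B leaves
B ∪ P biconnected (after deleting a vertex u, every vertex of P still reaches the endpoint of P
on its own side of u), so by maximality P already lies in B.
Backward direction: every arrow lies in a block, so its target reaches its source, and
undirected connectivity becomes directed connectivity.
-/

open Relation

/-- One directed step along an arrow of the quiver. -/
def QStep {V A : Type} (s t : A → V) (i j : V) : Prop := ∃ a : A, s a = i ∧ t a = j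

/-- One undirected step along an arrow of the quiver. -/
def UStep {V A : Type} (s t : A → V) (i j : V) : Prop :=
  ∃ a : A, (s a = i ∧ t a = j) ∨ (s a = j ∧ t a = i)

/-- A current is conserved if at each vertex the incoming total equals the outgoing total. -/
def Conserved {V A : Type} [Fintype A] [DecidableEq V] (s t : A → V) (lam : A → ℝ) : Prop :=
  ∀ i : V, ∑ a ∈ Finset.univ.filter (fun a => t a = i), lam a
         = ∑ a ∈ Finset.univ.filter (fun a => s a = i), lam a

/-- A simple oriented cycle of the quiver: a nonempty cyclically composable list of arrows
whose sources are pairwise distinct. -/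
structure SimpleCycle {V A : Type} (s t : A → V) where
  arrows : List A
  nonempty : arrows ≠ []
  chain : ∀ k : ℕ, ∀ h : k < arrows.length,
    t (arrows.get ⟨k, h⟩) =
      s (arrows.get ⟨(k + 1) % arrows.length, Nat.mod_lt _ (List.length_pos_iff.mpr nonempty)⟩)
  simple : (arrows.map s).Nodup

/-- The set of vertices touched by a set of arrows. -/
def QVerts {V A : Type} (s t : A → V) (B : Set A) : Set V :=
  {v | ∃ a ∈ B, s a = v ∨ t a = v}

/-- One undirected step along an arrow of `B` avoiding the vertex set `X`. -/
def AvoidStep {V A : Type} (s t : A → V) (B : Set A) (X : Set V) (i j : V) : Prop :=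
  i ∉ X ∧ j ∉ X ∧ ∃ a ∈ B, (s a = i ∧ t a = j) ∨ (s a = j ∧ t a = i)

/-- The subquiver on the arrow set `B` is connected after removing the vertices of `X`. -/
def ConnAvoid {V A : Type} (s t : A → V) (B : Set A) (X : Set V) : Prop :=
  ∀ i ∈ QVerts s t B \ X, ∀ j ∈ QVerts s t B \ X,
    Relation.ReflTransGen (AvoidStep s t B X) i j

/-- A nonempty arrow set is biconnected if it stays connected after removing any
single vertex (or none). -/
def IsBiconnQ {V A : Type} (s t : A → V) (B : Set A) : Prop :=
  B.Nonempty ∧ ∀ X : Set V, X.Subsingleton → ConnAvoid s t B X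

/-- A biconnected component (block) of the quiver: a maximal biconnected arrow set. -/
def IsBlockQ {V A : Type} (s t : A → V) (B : Set A) : Prop :=
  IsBiconnQ s t B ∧ ∀ B' : Set A, IsBiconnQ s t B' → B ⊆ B' → B' = B

/-- The subquiver on the arrow set `B` is strongly connected: any two of its vertices
are joined by a directed path using arrows of `B`. -/
def StrongOn {V A : Type} (s t : A → V) (B : Set A) : Prop :=
  ∀ i ∈ QVerts s t B, ∀ j ∈ QVerts s t B,
    Relation.ReflTransGen (fun i j => ∃ a ∈ B, s a = i ∧ t a = j) i j

/-- The arrows of `l`, in order, form a walk from `v` to `w`. Its vertex list is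
`v :: l.map t`, so the walk is a simple path iff that list is `Nodup`. -/
inductive IsArrowWalk {V A : Type} (s t : A → V) : V → V → List A → Prop
  | nil (v : V) : IsArrowWalk s t v v []
  | cons (a : A) {w : V} {l : List A} :
      IsArrowWalk s t (t a) w l → IsArrowWalk s t (s a) w (a :: l)

instance {V A : Type} (s t : A → V) (B : Set A) (X : Set V) : Std.Symm (AvoidStep s t B X) :=
  ⟨fun _ _ ⟨hi, hj, a, ha, h⟩ => ⟨hj, hi, a, ha, h.symm⟩⟩

namespace IsArrowWalk

variable {V A : Type} {s t : A → V} {v w : V} {l : List A}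

theorem of_reflTransGen (h : ReflTransGen (QStep s t) v w) : ∃ l, IsArrowWalk s t v w l := by
  induction h using ReflTransGen.head_induction_on with
  | refl => exact ⟨[], .nil w⟩
  | head hstep _ ih =>
    obtain ⟨l, hl⟩ := ih
    obtain ⟨a, rfl, rfl⟩ := hstep
    exact ⟨a :: l, .cons a hl⟩

theorem reflTransGen {r : V → V → Prop} (h : IsArrowWalk s t v w l)
    (hr : ∀ a ∈ l, r (s a) (t a)) : ReflTransGen r v w := by
  induction h with
  | nil => exact .refl
  | cons a _ ih =>
    exact .head (hr a List.mem_cons_self) (ih fun b hb => hr b (List.mem_cons_of_mem a hb))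

theorem end_mem (h : IsArrowWalk s t v w l) : w ∈ v :: l.map t := by
  induction h with
  | nil => exact List.mem_singleton_self _
  | cons a _ ih => exact List.mem_cons_of_mem _ ih

theorem src_mem (h : IsArrowWalk s t v w l) {a : A} (ha : a ∈ l) : s a ∈ v :: l.map t := by
  induction h with
  | nil => simp at ha
  | cons b _ ih =>
    rcases List.mem_cons.1 ha with rfl | ha
    · exact List.mem_cons_self
    · exact List.mem_cons_of_mem _ (ih ha)

theorem exists_suffix_of_mem (h : IsArrowWalk s t v w l) {x : V} (hx : x ∈ v :: l.map t) :
    ∃ l', l' <:+ l ∧ IsArrowWalk s t x w l' ∧ x :: l'.map t <:+ v :: l.map t := by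
  induction h with
  | nil v =>
    obtain rfl := List.mem_singleton.1 hx
    exact ⟨[], List.suffix_refl _, .nil _, List.suffix_refl _⟩
  | cons a h ih =>
    rcases List.mem_cons.1 hx with rfl | hx
    · exact ⟨_, List.suffix_refl _, .cons a h, List.suffix_refl _⟩
    · obtain ⟨l', hl', h', hverts⟩ := ih hx
      exact ⟨l', hl'.trans (List.suffix_cons _ _), h', hverts.trans (List.suffix_cons _ _)⟩

theorem exists_nodup (h : IsArrowWalk s t v w l) :
    ∃ l', l' ⊆ l ∧ IsArrowWalk s t v w l' ∧ (v :: l'.map t).Nodup := by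
  induction h with
  | nil v => exact ⟨[], List.nil_subset _, .nil v, List.nodup_singleton v⟩
  | cons a _ ih =>
    obtain ⟨l', hl', h', hnd⟩ := ih
    by_cases hmem : s a ∈ t a :: l'.map t
    · obtain ⟨l'', hl'', h'', hverts⟩ := h'.exists_suffix_of_mem hmem
      exact ⟨l'', fun b hb => List.mem_cons_of_mem a (hl' (hl''.subset hb)), h'',
        hnd.sublist hverts.sublist⟩
    · exact ⟨a :: l', List.cons_subset_cons a hl', .cons a h',
        List.nodup_cons.2 ⟨hmem, hnd⟩⟩

theorem reflTransGen_avoidStep {C : Set A} {X : Set V} (h : IsArrowWalk s t v w l)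
    (hC : ∀ a ∈ l, a ∈ C) (hX : ∀ y ∈ v :: l.map t, y ∉ X) :
    ReflTransGen (AvoidStep s t C X) v w :=
  h.reflTransGen fun a ha =>
    ⟨hX _ (h.src_mem ha), hX _ (List.mem_cons_of_mem _ (List.mem_map_of_mem ha)), a, hC a ha,
      .inl ⟨rfl, rfl⟩⟩

theorem exists_endpoint_reflTransGen_avoidStep {C : Set A} {X : Set V}
    (h : IsArrowWalk s t v w l) (hnd : (v :: l.map t).Nodup) (hC : ∀ a ∈ l, a ∈ C)
    (hX : X.Subsingleton) {x : V} (hx : x ∈ v :: l.map t) (hxX : x ∉ X) :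
    ∃ e, (e = v ∨ e = w) ∧ e ∉ X ∧ ReflTransGen (AvoidStep s t C X) x e := by
  induction h generalizing x with
  | nil => exact ⟨x, .inl (List.mem_singleton.1 hx), hxX, .refl⟩
  | @cons a w l h ih =>
    rcases List.mem_cons.1 hx with rfl | hx
    · exact ⟨s a, .inl rfl, hxX, .refl⟩
    obtain ⟨hsa, hnd⟩ := List.nodup_cons.1 hnd
    have hCl : ∀ b ∈ l, b ∈ C := fun b hb => hC b (List.mem_cons_of_mem a hb)
    obtain ⟨e, rfl | rfl, heX, hxe⟩ := ih hnd hCl hx hxX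
    · by_cases hsaX : s a ∈ X
      · have hpath : ∀ y ∈ t a :: l.map t, y ∉ X := fun y hy hyX =>
          hsa (hX hsaX hyX ▸ hy)
        exact ⟨w, .inr rfl, hpath w h.end_mem, hxe.trans (h.reflTransGen_avoidStep hCl hpath)⟩
      · exact ⟨s a, .inl rfl, hsaX, hxe.tail
          ⟨heX, hsaX, a, hC a List.mem_cons_self, .inr ⟨rfl, rfl⟩⟩⟩
    · exact ⟨e, .inr rfl, heX, hxe⟩

end IsArrowWalk

section Blocks

variable {V A : Type} {s t : A → V}

theorem IsBiconnQ.union_of_isArrowWalk {B : Set A} (hB : IsBiconnQ s t B) {v w : V}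
    {l : List A} (h : IsArrowWalk s t v w l) (hnd : (v :: l.map t).Nodup)
    (hv : v ∈ QVerts s t B) (hw : w ∈ QVerts s t B) :
    IsBiconnQ s t (B ∪ {a | a ∈ l}) := by
  refine ⟨hB.1.mono Set.subset_union_left, fun X hX i hi j hj => ?_⟩
  have reach : ∀ x ∈ QVerts s t (B ∪ {a | a ∈ l}) \ X, ∃ e ∈ QVerts s t B \ X,
      ReflTransGen (AvoidStep s t (B ∪ {a | a ∈ l}) X) x e := by
    rintro x ⟨⟨b, hb | hb, hxb⟩, hxX⟩
    · exact ⟨x, ⟨⟨b, hb, hxb⟩, hxX⟩, .refl⟩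
    · have hx : x ∈ v :: l.map t := by
        rcases hxb with rfl | rfl
        · exact h.src_mem hb
        · exact List.mem_cons_of_mem _ (List.mem_map_of_mem hb)
      obtain ⟨e, hev, heX, hxe⟩ :=
        h.exists_endpoint_reflTransGen_avoidStep hnd (fun _ => Or.inr) hX hx hxX
      exact ⟨e, ⟨by rcases hev with rfl | rfl <;> assumption, heX⟩, hxe⟩
  obtain ⟨ei, hei, hiei⟩ := reach i hi
  obtain ⟨ej, hej, hjej⟩ := reach j hj
  have heiej : ReflTransGen (AvoidStep s t (B ∪ {a | a ∈ l}) X) ei ej :=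
    ReflTransGen.mono (p := AvoidStep s t _ X)
      (fun _ _ ⟨hx, hy, a, ha, h⟩ => ⟨hx, hy, a, .inl ha, h⟩) _ _ (hB.2 X hX ei hei ej hej)
  exact hiei.trans (heiej.trans (Std.Symm.symm _ _ hjej))

theorem IsBlockQ.subset_of_isArrowWalk {B : Set A} (hB : IsBlockQ s t B) {v w : V}
    {l : List A} (h : IsArrowWalk s t v w l) (hnd : (v :: l.map t).Nodup)
    (hv : v ∈ QVerts s t B) (hw : w ∈ QVerts s t B) : ∀ a ∈ l, a ∈ B := by
  have hunion := hB.2 _ (hB.1.union_of_isArrowWalk h hnd hv hw) Set.subset_union_left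
  exact fun a ha => hunion ▸ Set.mem_union_right B ha

theorem IsBlockQ.strongOn {B : Set A} (hB : IsBlockQ s t B)
    (hstrong : ∀ i j : V, ReflTransGen (QStep s t) i j) : StrongOn s t B := by
  intro i hi j hj
  obtain ⟨l, h⟩ := IsArrowWalk.of_reflTransGen (hstrong i j)
  obtain ⟨l', -, h', hnd⟩ := h.exists_nodup
  exact h'.reflTransGen fun a ha => ⟨a, hB.subset_of_isArrowWalk h' hnd hi hj a ha, rfl, rfl⟩

theorem isBiconnQ_singleton (a : A) : IsBiconnQ s t {a} := by
  refine ⟨Set.singleton_nonempty a, ?_⟩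
  rintro X - i ⟨⟨_, rfl, hi⟩, hiX⟩ j ⟨⟨_, rfl, hj⟩, hjX⟩
  by_cases hij : i = j
  · exact hij ▸ .refl
  · refine .single ⟨hiX, hjX, _, Set.mem_singleton _, ?_⟩
    rcases hi with rfl | rfl <;> rcases hj with rfl | rfl <;> simp_all

theorem exists_isBlockQ_mem [Finite A] (s t : A → V) (a : A) :
    ∃ B, IsBlockQ s t B ∧ a ∈ B := by
  obtain ⟨B, haB, hmax⟩ := Finite.exists_le_maximal (isBiconnQ_singleton (s := s) (t := t) a)
  exact ⟨B, ⟨hmax.prop, fun B' hB' hBB' => (hmax.le_of_ge hB' hBB').antisymm hBB'⟩,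
    haB rfl⟩

theorem reflTransGen_qStep_of_strongOn [Finite A]
    (hblocks : ∀ B, IsBlockQ s t B → StrongOn s t B) {i j : V}
    (h : ReflTransGen (UStep s t) i j) : ReflTransGen (QStep s t) i j := by
  have hback : ∀ a : A, ReflTransGen (QStep s t) (t a) (s a) := fun a => by
    obtain ⟨B, hB, haB⟩ := exists_isBlockQ_mem s t a
    exact ReflTransGen.mono (p := QStep s t) (fun _ _ ⟨b, _, hb⟩ => ⟨b, hb⟩) _ _
      (hblocks B hB (t a) ⟨a, haB, .inr rfl⟩ (s a) ⟨a, haB, .inl rfl⟩)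
  induction h with
  | refl => exact .refl
  | tail _ hstep ih =>
    obtain ⟨a, ⟨rfl, rfl⟩ | ⟨rfl, rfl⟩⟩ := hstep
    · exact ih.tail ⟨a, rfl, rfl⟩
    · exact ih.trans (hback a)

end Blocks

theorem stmt8_general {V A : Type} [Fintype A]
    (s t : A → V)
    (hconn : ∀ i j : V, Relation.ReflTransGen (UStep s t) i j) :
    (∀ i j : V, Relation.ReflTransGen (QStep s t) i j) ↔
      (∀ B : Set A, IsBlockQ s t B → StrongOn s t B) :=
  ⟨fun hstrong _ hB => hB.strongOn hstrong,
    fun hblocks i j => reflTransGen_qStep_of_strongOn hblocks (hconn i j)⟩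

/-- A connected quiver is strongly connected iff each of its biconnected components
is strongly connected. -/
theorem stmt8 {V A : Type} [Fintype V] [Fintype A] [DecidableEq V] [DecidableEq A]
    (s t : A → V)
    (hconn : ∀ i j : V, Relation.ReflTransGen (UStep s t) i j) :
    (∀ i j : V, Relation.ReflTransGen (QStep s t) i j) ↔
      (∀ B : Set A, IsBlockQ s t B → StrongOn s t B) :=
  stmt8_general s t hconn
end

section
/- If a quiver Q with a Hamiltonian oriented cycle w0 (labeled 1→2→…→n→1) admits another oriented cycle w1 passing through all vertices in a different cyclic order, then Q admits no R-charge (and hence no cut). -/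
/-!
Let `φ i = R (e 0) + ⋯ + R (e (i - 1))` be the prefix sums of an R-charge along `w0`. An arrow
`a : i → j` with `i ≠ j` closes the arc `j → j + 1 → ⋯ → i` of `w0` to a simple cycle, so
`R a = φ j - φ i + 2 [j < i]`: the descending arrows carry an extra `2`. Summing over `w1`, the
potential telescopes away and `2 = 2 · #descents`, so `w1` descends exactly once. The cyclic gaps
`σ (k + 1) - σ k`, read in `{1, …, n - 1}`, sum to `n · #descents = n`, so all of them are `1` and
`σ` is a rotation. A cut `I` is excluded because `2 · 𝟙_I` would be an R-charge.
-/

open Relation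

/-- A cut: every simple oriented cycle contains exactly one arrow of `I`. -/
def IsCut {V A : Type} [DecidableEq A] (s t : A → V) (I : Finset A) : Prop :=
  ∀ w : SimpleCycle s t, (w.arrows.filter (fun a => decide (a ∈ I))).length = 1

/-- A weak cut: every simple oriented cycle contains at most one arrow of `I`. -/
def IsWeakCut {V A : Type} [DecidableEq A] (s t : A → V) (I : Finset A) : Prop :=
  ∀ w : SimpleCycle s t, (w.arrows.filter (fun a => decide (a ∈ I))).length ≤ 1

/-- An R-charge: a real function on arrows summing to 2 around every simple oriented cycle. -/
def IsRCharge {V A : Type} (s t : A → V) (R : A → ℝ) : Prop :=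
  ∀ w : SimpleCycle s t, (w.arrows.map R).sum = 2

open Fin.NatCast Fin.CommRing

namespace SimpleCycle

variable {V A : Type} {s t : A → V}

def ofFn {M : ℕ} [NeZero M] (g : Fin M → A) (v : Fin M → V) (hv : Function.Injective v)
    (hs : ∀ k, s (g k) = v k) (ht : ∀ k, t (g k) = v (k + 1)) : SimpleCycle s t where
  arrows := List.ofFn g
  nonempty := by simp [NeZero.ne M]
  chain k hk := by
    have hkM : k < M := by simpa using hk
    have hsucc : (⟨k, hkM⟩ + 1 : Fin M).val = (k + 1) % M := by
      simp [Fin.val_add, Nat.add_mod]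
    simp only [List.get_eq_getElem, List.getElem_ofFn, List.length_ofFn, ht, hs]
    congr 1
    exact Fin.ext hsucc
  simple := by
    rw [List.map_ofFn, List.nodup_ofFn]
    convert hv using 1
    exact funext hs

@[simp]
lemma ofFn_arrows {M : ℕ} [NeZero M] (g : Fin M → A) (v : Fin M → V) (hv : Function.Injective v)
    (hs : ∀ k, s (g k) = v k) (ht : ∀ k, t (g k) = v (k + 1)) :
    (ofFn g v hv hs ht).arrows = List.ofFn g := rfl

end SimpleCycle

lemma IsRCharge.sum_ofFn {V A : Type} {s t : A → V} {R : A → ℝ} (hR : IsRCharge s t R)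
    {M : ℕ} [NeZero M] (g : Fin M → A) (v : Fin M → V) (hv : Function.Injective v)
    (hs : ∀ k, s (g k) = v k) (ht : ∀ k, t (g k) = v (k + 1)) :
    ∑ k, R (g k) = 2 := by
  simpa [List.sum_ofFn] using hR (SimpleCycle.ofFn g v hv hs ht)

lemma IsCut.isRCharge {V A : Type} [DecidableEq A] {s t : A → V} {I : Finset A}
    (hI : IsCut s t I) : IsRCharge s t fun a => if a ∈ I then 2 else 0 := by
  intro w
  rw [List.sum_map_ite, List.map_const', List.sum_replicate, hI w]
  simp

section CyclicDescents

variable {m : ℕ} [NeZero m] {α : Type*} [LinearOrder α]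

def cyclicDescents (g : Fin m → α) : Finset (Fin m) :=
  Finset.univ.filter fun k => g (k + 1) < g k

lemma sum_eq_card_cyclicDescents_smul {M : Type*} [AddCancelCommMonoid M] (g : Fin m → α)
    (x : Fin m → M) (ψ : α → M) (c : M)
    (hx : ∀ k, x k + ψ (g k) = ψ (g (k + 1)) + if g (k + 1) < g k then c else 0) :
    ∑ k, x k = (cyclicDescents g).card • c := by
  have hsum := Finset.sum_congr rfl fun k (_ : k ∈ Finset.univ) => hx k
  have hshift : ∑ k, ψ (g (k + 1)) = ∑ k, ψ (g k) :=
    Equiv.sum_comp (Equiv.addRight 1) (ψ ∘ g)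
  rw [Finset.sum_add_distrib, Finset.sum_add_distrib, hshift, add_comm, ← Finset.sum_filter,
    Finset.sum_const] at hsum
  exact add_left_cancel hsum

end CyclicDescents

lemma Fin.val_add_val_sub {n : ℕ} (a b : Fin n) :
    b.val + (a - b).val = a.val + if a < b then n else 0 := by
  split_ifs with hab
  · rw [Fin.coe_sub_iff_lt.mpr hab]
    omega
  · rw [Fin.coe_sub_iff_le.mpr (not_lt.mp hab)]
    omega

lemma Fin.add_one_ne_self {n : ℕ} [NeZero n] (hn : 1 < n) (k : Fin n) : k + 1 ≠ k := by
  have : Nontrivial (Fin n) := Fin.nontrivial_iff_two_le.mpr hn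
  simp

lemma Equiv.Perm.exists_eq_add_of_card_cyclicDescents_eq_one {n : ℕ} [NeZero n] (hn : 1 < n)
    (σ : Equiv.Perm (Fin n)) (hσ : (cyclicDescents σ).card = 1) : ∃ c, ∀ x, σ x = x + c := by
  set gap : Fin n → ℕ := fun k => (σ (k + 1) - σ k).val
  have hgap_pos : ∀ k, 1 ≤ gap k := fun k =>
    Nat.one_le_iff_ne_zero.mpr <| Fin.val_ne_zero_iff.mpr <| sub_ne_zero.mpr <|
      σ.injective.ne (Fin.add_one_ne_self hn k)
  have hgap_sum : ∑ k, gap k = n := by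
    simpa [hσ] using sum_eq_card_cyclicDescents_smul σ gap (fun a => a.val) n
      fun k => by rw [add_comm]; exact Fin.val_add_val_sub _ _
  have hgap : ∀ k, gap k = 1 := by
    have hsum_one : ∑ _k : Fin n, 1 = ∑ k, gap k := by simp [hgap_sum]
    exact fun k => ((Finset.sum_eq_sum_iff_of_le fun k _ => hgap_pos k).mp hsum_one k
      (Finset.mem_univ k)).symm
  have hstep : ∀ k, σ (k + 1) = σ k + 1 := fun k =>
    sub_eq_iff_eq_add'.mp (Fin.ext ((hgap k).trans (Fin.val_one' n ▸ Nat.mod_eq_of_lt hn).symm))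
  have hnat : ∀ p : ℕ, σ p = p + σ 0 := by
    intro p
    induction p with
    | zero => simp
    | succ p ih => rw [Nat.cast_succ, hstep, ih]; ring
  exact ⟨σ 0, fun x => by simpa using hnat x.val⟩

section RCharge

variable {A : Type} {n : ℕ} [NeZero n] {s t : A → Fin n} {e : Fin n → A} {R : A → ℝ}

def prefixCharge (R : A → ℝ) (e : Fin n → A) (x : ℕ) : ℝ :=
  ∑ p ∈ Finset.range x, R (e p)

lemma prefixCharge_add (x y : ℕ) :
    prefixCharge R e (x + y) = prefixCharge R e x + ∑ p ∈ Finset.range y, R (e (x + p : ℕ)) :=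
  Finset.sum_range_add _ x y

lemma IsRCharge.prefixCharge_n_add (hR : IsRCharge s t R) (hse : ∀ i, s (e i) = i)
    (hte : ∀ i, t (e i) = i + 1) (x : ℕ) :
    prefixCharge R e (n + x) = 2 + prefixCharge R e x := by
  have hcycle : prefixCharge R e n = 2 := by
    rw [prefixCharge, ← Fin.sum_univ_eq_sum_range (fun p => R (e p))]
    simpa using hR.sum_ofFn e id Function.injective_id hse hte
  rw [prefixCharge_add, hcycle, prefixCharge]
  simp

lemma IsRCharge.add_prefixCharge_source (hR : IsRCharge s t R) (hse : ∀ i, s (e i) = i)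
    (hte : ∀ i, t (e i) = i + 1) {a : A} (ha : s a ≠ t a) :
    R a + prefixCharge R e (s a) = prefixCharge R e (t a) + if t a < s a then 2 else 0 := by
  set i := s a with hi
  set j := t a with hj
  set m := (i - j).val
  -- the chord `a : i → j` closes the path `e j, e (j + 1), …, e (i - 1)` to a simple cycle
  let g : Fin (m + 1) → A := Fin.snoc (α := fun _ => A) (fun p : Fin m => e (j + p.val)) a
  let v : Fin (m + 1) → Fin n := fun k => j + k.val
  have hv : Function.Injective v := by
    intro k l hkl
    have hm : m < n := (i - j).isLt
    have hval := congrArg Fin.val (add_left_cancel hkl)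
    simp only [Fin.val_natCast] at hval
    exact Fin.ext (by rwa [Nat.mod_eq_of_lt (by omega), Nat.mod_eq_of_lt (by omega)] at hval)
  have hs : ∀ k, s (g k) = v k := Fin.lastCases (by simp [g, v, m, ← hi])
    fun p => by simp [g, v, hse]
  have ht : ∀ k, t (g k) = v (k + 1) := Fin.lastCases (by simp [g, v, ← hj])
    fun p => by simp [g, v, hte, Fin.coeSucc_eq_succ, add_assoc]
  have hcycle := hR.sum_ofFn g v hv hs ht
  simp only [Fin.sum_univ_castSucc, g, Fin.snoc_castSucc, Fin.snoc_last] at hcycle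
  have hpath : prefixCharge R e (j.val + m) = prefixCharge R e j.val + (2 - R a) := by
    rw [prefixCharge_add, ← hcycle, ← Fin.sum_univ_eq_sum_range (fun p => R (e (j.val + p : ℕ)))]
    simp
  rw [Fin.val_add_val_sub] at hpath
  rcases lt_or_gt_of_ne ha with hij | hji
  · rw [if_pos hij, add_comm, hR.prefixCharge_n_add hse hte] at hpath
    rw [if_neg hij.asymm]
    linarith
  · rw [if_neg hji.asymm, add_zero] at hpath
    rw [if_pos hji]
    linarith

end RCharge

theorem stmt12_general {A : Type} [DecidableEq A] {n : ℕ} [NeZero n]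
    (s t : A → Fin n)
    (e : Fin n → A) (hse : ∀ i : Fin n, s (e i) = i) (hte : ∀ i : Fin n, t (e i) = i + 1)
    (σ : Equiv.Perm (Fin n)) (f : Fin n → A)
    (hsf : ∀ k : Fin n, s (f k) = σ k) (htf : ∀ k : Fin n, t (f k) = σ (k + 1))
    (hdiff : ¬ ∃ c : Fin n, ∀ x : Fin n, σ x = x + c) :
    (¬ ∃ R : A → ℝ, IsRCharge s t R) ∧ (¬ ∃ I : Finset A, IsCut s t I) := by
  have hnoR : ¬ ∃ R : A → ℝ, IsRCharge s t R := by
    rintro ⟨R, hR⟩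
    have hn : 1 < n := by
      by_contra! h
      obtain rfl : n = 1 := le_antisymm h NeZero.one_le
      exact hdiff ⟨0, fun x => Subsingleton.elim _ _⟩
    have hchord (k : Fin n) : R (f k) + prefixCharge R e (σ k) =
        prefixCharge R e (σ (k + 1)) + if σ (k + 1) < σ k then 2 else 0 := by
      have hne : s (f k) ≠ t (f k) := by
        rw [hsf, htf]
        exact σ.injective.ne (Fin.add_one_ne_self hn k).symm
      simpa only [hsf, htf] using hR.add_prefixCharge_source hse hte hne
    have hdesc : (cyclicDescents σ).card = 1 := by
      have h := sum_eq_card_cyclicDescents_smul σ (fun k => R (f k))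
        (fun i => prefixCharge R e i) 2 hchord
      rw [hR.sum_ofFn f σ σ.injective hsf htf, nsmul_eq_mul] at h
      exact_mod_cast (by linarith : ((cyclicDescents σ).card : ℝ) = 1)
    exact hdiff (σ.exists_eq_add_of_card_cyclicDescents_eq_one hn hdesc)
  exact ⟨hnoR, fun ⟨I, hI⟩ => hnoR ⟨_, hI.isRCharge⟩⟩

/-- If a quiver with a Hamiltonian oriented cycle `1 → 2 → ⋯ → n → 1` has another
Hamiltonian oriented cycle visiting the vertices in a different cyclic order (a
permutation which is not a rotation), then it admits no R-charge and no cut. -/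
theorem stmt12 {A : Type} [Fintype A] [DecidableEq A] {n : ℕ} [NeZero n]
    (s t : A → Fin n)
    (e : Fin n → A) (hse : ∀ i : Fin n, s (e i) = i) (hte : ∀ i : Fin n, t (e i) = i + 1)
    (hw0 : ∃ w : SimpleCycle s t, w.arrows = List.ofFn e)
    (σ : Equiv.Perm (Fin n)) (f : Fin n → A)
    (hsf : ∀ k : Fin n, s (f k) = σ k) (htf : ∀ k : Fin n, t (f k) = σ (k + 1))
    (hw1 : ∃ w : SimpleCycle s t, w.arrows = List.ofFn f)
    (hdiff : ¬ ∃ c : Fin n, ∀ x : Fin n, σ x = x + c) :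
    (¬ ∃ R : A → ℝ, IsRCharge s t R) ∧ (¬ ∃ I : Finset A, IsCut s t I) :=
  stmt12_general s t e hse hte σ f hsf htf hdiff
end

section
/- Suppose a quiver Q admits a scaling solution, i.e., points (r⃗_i)_{i∈Q0} in ℝ³, not all equal where arrows join distinct points, such that for every vertex i: Σ_{a:i→j} 1/|r⃗_i − r⃗_j| − Σ_{a:j→i} 1/|r⃗_i − r⃗_j| = 0 (sum over arrows with multiplicity, all pairwise distances between endpoints of arrows being positive). Then for every weak cut I of Q one has |I| ≤ |Q1 − I|, where cardinalities count arrows. -/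
open Relation

/-!
The current `λ a = 1 / |r (s a) - r (t a)|` is positive and conserved, hence a positive
combination of unit currents of simple cycles: find a simple cycle in its support, subtract it
with the smallest current on it as weight, and induct on the support. Now weigh every arrow by
`±|r (s a) - r (t a)|`, with the minus sign on `I`. Paired with `λ` this gives `|Iᶜ| - |I|`;
paired with the unit current of a simple cycle it is nonnegative, because the cycle meets `I`
at most once and no side of a closed polygon is longer than the sum of the others.
-/

theorem Function.exists_iterate_mem_periodicPts {α : Type*} [Finite α] (f : α → α) (x : α) :
    ∃ m, f^[m] x ∈ periodicPts f := by
  obtain ⟨m, n, hne, heq⟩ := Finite.exists_ne_map_eq_of_infinite (f^[·] x)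
  wlog hlt : m < n generalizing m n
  · exact this n m hne.symm heq.symm (by omega)
  refine ⟨m, mk_mem_periodicPts (Nat.sub_pos_of_lt hlt) ?_⟩
  rw [IsPeriodicPt, IsFixedPt, ← iterate_add_apply, Nat.sub_add_cancel hlt.le]
  exact heq.symm

theorem two_mul_dist_le_sum_range_dist {X : Type*} [PseudoMetricSpace X] (x : ℕ → X) {n j : ℕ}
    (hx : x n = x 0) (hj : j < n) :
    2 * dist (x j) (x (j + 1)) ≤ ∑ k ∈ Finset.range n, dist (x k) (x (k + 1)) := by
  have h₁ := dist_le_range_sum_dist x j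
  have h₂ := dist_le_Ico_sum_dist x (show j + 1 ≤ n from hj)
  have h₃ : dist (x j) (x (j + 1)) ≤ dist (x 0) (x j) + dist (x (j + 1)) (x n) := by
    rw [hx, dist_comm (x 0), dist_comm (x (j + 1))]
    exact dist_triangle _ _ _
  rw [← Finset.sum_range_add_sum_Ico _ hj.le, Finset.sum_eq_sum_Ico_succ_bot hj]
  linarith

namespace SimpleCycle

variable {V A : Type} {s t : A → V} (w : SimpleCycle s t)

theorem nodup_arrows : w.arrows.Nodup := w.simple.of_map

theorem length_pos : 0 < w.arrows.length := List.length_pos_iff.mpr w.nonempty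

theorem target_eq_source_succ {k : ℕ} (hk : k < w.arrows.length) :
    t w.arrows[k] = s (w.arrows[(k + 1) % w.arrows.length]'(Nat.mod_lt _ w.length_pos)) :=
  w.chain k hk

theorem two_mul_dist_le_sum {X : Type*} [PseudoMetricSpace X] (p : V → X) {a : A}
    (ha : a ∈ w.arrows) :
    2 * dist (p (s a)) (p (t a)) ≤ (w.arrows.map fun b => dist (p (s b)) (p (t b))).sum := by
  obtain ⟨j, hj, rfl⟩ := List.getElem_of_mem ha
  set x : ℕ → X := fun k => p (s (w.arrows[k % w.arrows.length]'(Nat.mod_lt _ w.length_pos)))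
  have hx : ∀ k (hk : k < w.arrows.length),
      dist (x k) (x (k + 1)) = dist (p (s w.arrows[k])) (p (t w.arrows[k])) := by
    intro k hk
    simp only [x, Nat.mod_eq_of_lt hk, w.target_eq_source_succ hk]
  have hclosed : x w.arrows.length = x 0 := by simp only [x, Nat.mod_self, Nat.zero_mod]
  rw [← hx j hj, ← Fin.sum_univ_fun_getElem]
  calc 2 * dist (x j) (x (j + 1))
      ≤ ∑ k ∈ Finset.range w.arrows.length, dist (x k) (x (k + 1)) :=
        two_mul_dist_le_sum_range_dist x hclosed hj
    _ = _ := by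
      rw [Finset.sum_range]
      exact Finset.sum_congr rfl fun k _ => hx k k.isLt

theorem map_target_eq_rotate : w.arrows.map t = (w.arrows.map s).rotate 1 := by
  refine List.ext_getElem (by simp) fun k hk _ => ?_
  simp only [List.getElem_map, List.getElem_rotate, List.length_map]
  simp only [List.length_map] at hk
  exact w.target_eq_source_succ hk

theorem map_target_perm : (w.arrows.map t).Perm (w.arrows.map s) :=
  w.map_target_eq_rotate ▸ List.rotate_perm _ _

/- Send a vertex `v` to the target of a chosen `P`-arrow out of `v`: one period of a periodic
orbit of this self-map of a finite set of vertices is a simple cycle. -/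
open Function in
theorem exists_of_forall_exists_next [Finite A] (P : A → Prop) {a₀ : A} (h₀ : P a₀)
    (hnext : ∀ a, P a → ∃ b, P b ∧ s b = t a) : ∃ w : SimpleCycle s t, ∀ a ∈ w.arrows, P a := by
  let U := Set.range fun a : {a // P a} => s a
  have hout : ∀ v : U, ∃ a, P a ∧ s a = v := fun ⟨_, ⟨a, ha⟩, h⟩ => ⟨a, ha, h⟩
  choose out hP hs using hout
  have hg : ∀ v : U, t (out v) ∈ U := fun v =>
    let ⟨b, hb, hsb⟩ := hnext _ (hP v); ⟨⟨b, hb⟩, hsb⟩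
  let g : U → U := fun v => ⟨t (out v), hg v⟩
  obtain ⟨m, hm⟩ := exists_iterate_mem_periodicPts g ⟨s a₀, ⟨a₀, h₀⟩, rfl⟩
  set v₀ := g^[m] ⟨s a₀, ⟨a₀, h₀⟩, rfl⟩
  have hn := minimalPeriod_pos_of_mem_periodicPts hm
  refine ⟨⟨(List.range (minimalPeriod g v₀)).map fun k => out (g^[k] v₀), ?_, ?_, ?_⟩, ?_⟩
  · simpa using hn.ne'
  · intro k hk
    simp only [List.get_eq_getElem, List.getElem_map, List.getElem_range, List.length_map,
      List.length_range, hs, iterate_mod_minimalPeriod_eq, iterate_succ_apply']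
    rfl
  · rw [List.map_map]
    refine List.Nodup.map_on (fun k hk l hl hkl => ?_) List.nodup_range
    simp only [Function.comp_apply, hs] at hkl
    exact iterate_injOn_Iio_minimalPeriod (List.mem_range.1 hk) (List.mem_range.1 hl)
      (Subtype.ext hkl)
  · simp [hP]

variable [DecidableEq A]

def current (a : A) : ℝ := if a ∈ w.arrows then 1 else 0

theorem sum_mul_current [Fintype A] (f : A → ℝ) :
    ∑ a, f a * w.current a = (w.arrows.map f).sum := by
  have : Finset.univ.filter (· ∈ w.arrows) = w.arrows.toFinset := by ext; simp
  simp only [current, mul_ite, mul_one, mul_zero]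
  rw [← Finset.sum_filter, this, List.sum_toFinset _ w.nodup_arrows]

theorem conserved_current [Fintype A] [DecidableEq V] : Conserved s t w.current := by
  have key : ∀ (g : A → V) (i : V), ∑ a ∈ Finset.univ.filter (g · = i), w.current a
      = ((w.arrows.map g).map fun v => if v = i then (1 : ℝ) else 0).sum := by
    intro g i
    rw [List.map_map, ← w.sum_mul_current, Finset.sum_filter]
    simp only [Function.comp, boole_mul]
  intro i
  rw [key, key, (w.map_target_perm.map _).sum_eq]

end SimpleCycle

namespace Conserved

variable {V A : Type} [Fintype A] [DecidableEq V] {s t : A → V} {lam mu : A → ℝ}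

theorem sub_smul (hl : Conserved s t lam) (hm : Conserved s t mu) (c : ℝ) :
    Conserved s t (lam - c • mu) := by
  intro i
  simp only [Pi.sub_apply, Pi.smul_apply, smul_eq_mul, Finset.sum_sub_distrib, ← Finset.mul_sum,
    hl i, hm i]

theorem exists_pos_next (hnn : 0 ≤ lam) (hc : Conserved s t lam) {a : A} (ha : 0 < lam a) :
    ∃ b, 0 < lam b ∧ s b = t a := by
  by_contra! h
  have hin : lam a ≤ ∑ b ∈ Finset.univ.filter (t · = t a), lam b :=
    Finset.single_le_sum (fun b _ => hnn b) (by simp)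
  have hout : ∑ b ∈ Finset.univ.filter (s · = t a), lam b ≤ 0 :=
    Finset.sum_nonpos fun b hb => not_lt.mp fun hb' => h b hb' (Finset.mem_filter.mp hb).2
  linarith [hc (t a)]

theorem exists_simpleCycle (hnn : 0 ≤ lam) (hc : Conserved s t lam) {a₀ : A} (ha₀ : 0 < lam a₀) :
    ∃ w : SimpleCycle s t, ∀ a ∈ w.arrows, 0 < lam a :=
  SimpleCycle.exists_of_forall_exists_next (0 < lam ·) ha₀ fun _ ha => hc.exists_pos_next hnn ha

variable [DecidableEq A]

theorem exists_sub_smul_current (hnn : 0 ≤ lam) (hc : Conserved s t lam) (h0 : lam ≠ 0) :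
    ∃ (w : SimpleCycle s t) (c : ℝ), 0 < c ∧ 0 ≤ lam - c • w.current ∧
      Function.support (lam - c • w.current) ⊂ Function.support lam := by
  obtain ⟨a₀, ha₀⟩ : ∃ a, 0 < lam a := by
    by_contra! h
    exact h0 (funext fun a => le_antisymm (h a) (hnn a))
  obtain ⟨w, hw⟩ := hc.exists_simpleCycle hnn ha₀
  obtain ⟨b, hb, hmin⟩ := w.arrows.toFinset.exists_min_image lam
    (List.toFinset_nonempty_iff _ |>.mpr w.nonempty)
  rw [List.mem_toFinset] at hb
  refine ⟨w, lam b, hw b hb, fun a => ?_, ?_⟩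
  · by_cases ha : a ∈ w.arrows
    · simpa [SimpleCycle.current, ha] using hmin a (List.mem_toFinset.mpr ha)
    · simpa [SimpleCycle.current, ha] using hnn a
  · refine (Set.ssubset_iff_of_subset fun a ha => ?_).mpr ⟨b, (hw b hb).ne', ?_⟩
    · refine fun hz => ha ?_
      have : a ∉ w.arrows := fun h => (hw a h).ne' hz
      simp [SimpleCycle.current, this, hz]
    · simp [SimpleCycle.current, hb]

theorem sum_mul_nonneg (f : A → ℝ) (hf : ∀ w : SimpleCycle s t, 0 ≤ (w.arrows.map f).sum)
    (hnn : 0 ≤ lam) (hc : Conserved s t lam) : 0 ≤ ∑ a, f a * lam a := by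
  induction hN : (Function.support lam).ncard using Nat.strong_induction_on generalizing lam with
  | _ N ih =>
  obtain rfl | h0 := eq_or_ne lam 0
  · simp
  obtain ⟨w, c, hc₀, hnn', hsupp⟩ := hc.exists_sub_smul_current hnn h0
  have hrest := ih _ (hN ▸ Set.ncard_lt_ncard hsupp) hnn' (hc.sub_smul w.conserved_current c) rfl
  have hsplit : ∑ a, f a * lam a
      = c * (w.arrows.map f).sum + ∑ a, f a * (lam - c • w.current) a := by
    rw [← w.sum_mul_current, Finset.mul_sum, ← Finset.sum_add_distrib]
    refine Finset.sum_congr rfl fun a _ => ?_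
    simp only [Pi.sub_apply, Pi.smul_apply, smul_eq_mul]
    ring
  rw [hsplit]
  exact add_nonneg (mul_nonneg hc₀.le (hf w)) hrest

end Conserved

theorem List.sum_map_ite_neg {A : Type} [DecidableEq A] (I : Finset A) (d : A → ℝ) (L : List A) :
    (L.map fun a => if a ∈ I then -d a else d a).sum
      = (L.map d).sum - 2 * ((L.filter (· ∈ I)).map d).sum := by
  induction L with
  | nil => simp
  | cons a L ih => by_cases ha : a ∈ I <;> simp [ha, ih] <;> ring

theorem IsWeakCut.sum_signed_dist_nonneg {V A : Type} {X : Type*} [DecidableEq A]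
    [PseudoMetricSpace X] {s t : A → V} {I : Finset A} (hI : IsWeakCut s t I) (p : V → X)
    (w : SimpleCycle s t) :
    0 ≤ (w.arrows.map fun a =>
      if a ∈ I then -dist (p (s a)) (p (t a)) else dist (p (s a)) (p (t a))).sum := by
  rw [List.sum_map_ite_neg]
  rcases Nat.le_one_iff_eq_zero_or_eq_one.mp (hI w) with h | h
  · rw [List.length_eq_zero_iff] at h
    rw [h, List.map_nil, List.sum_nil, mul_zero, sub_zero]
    exact List.sum_nonneg (by simp)
  · obtain ⟨a, ha⟩ := List.length_eq_one_iff.mp h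
    have haw : a ∈ w.arrows := (List.mem_filter.mp (ha ▸ List.mem_singleton_self a)).1
    rw [ha, List.map_singleton, List.sum_singleton]
    linarith [w.two_mul_dist_le_sum p haw]

theorem stmt13_general {V A : Type} [Fintype A] [DecidableEq V] [DecidableEq A]
    (s t : A → V) (r : V → EuclideanSpace ℝ (Fin 3))
    (hd : ∀ a : A, r (s a) ≠ r (t a))
    (hdenef : ∀ i : V,
      ∑ a ∈ Finset.univ.filter (fun a => s a = i), (dist (r (s a)) (r (t a)))⁻¹
      - ∑ a ∈ Finset.univ.filter (fun a => t a = i), (dist (r (s a)) (r (t a)))⁻¹ = 0) :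
    ∀ I : Finset A, IsWeakCut s t I → I.card ≤ Iᶜ.card := by
  intro I hI
  set d : A → ℝ := fun a => dist (r (s a)) (r (t a))
  have hc : Conserved s t fun a => (d a)⁻¹ := fun i => (sub_eq_zero.mp (hdenef i)).symm
  have key := hc.sum_mul_nonneg _ (hI.sum_signed_dist_nonneg r) fun a => inv_nonneg.mpr dist_nonneg
  have hsum : ∑ a, (if a ∈ I then -d a else d a) * (d a)⁻¹ = (Iᶜ.card : ℝ) - I.card := by
    have hd_inv : ∀ a, d a * (d a)⁻¹ = 1 := fun a => mul_inv_cancel₀ (dist_ne_zero.mpr (hd a))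
    have hcompl : Finset.univ.filter (· ∉ I) = Iᶜ := by ext; simp
    simp only [ite_mul, neg_mul, hd_inv, Finset.sum_ite, hcompl, Finset.filter_mem_eq_of_subset,
      Finset.subset_univ, Finset.sum_neg_distrib, Finset.sum_const, nsmul_eq_mul, mul_one]
    ring
  exact_mod_cast (by linarith : (I.card : ℝ) ≤ Iᶜ.card)

/-- If a quiver admits a scaling solution (a configuration of points in `ℝ³` with
distinct endpoints along arrows satisfying the conformal Denef equations), then every
weak cut `I` satisfies `|I| ≤ |Q₁ − I|`. -/
theorem stmt13 {V A : Type} [Fintype V] [Fintype A] [DecidableEq V] [DecidableEq A]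
    (s t : A → V) (r : V → EuclideanSpace ℝ (Fin 3))
    (hd : ∀ a : A, r (s a) ≠ r (t a))
    (hdenef : ∀ i : V,
      ∑ a ∈ Finset.univ.filter (fun a => s a = i), (dist (r (s a)) (r (t a)))⁻¹
      - ∑ a ∈ Finset.univ.filter (fun a => t a = i), (dist (r (s a)) (r (t a)))⁻¹ = 0) :
    ∀ I : Finset A, IsWeakCut s t I → I.card ≤ Iᶜ.card :=
  stmt13_general s t r hd hdenef
end
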